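/- arXiv:0710.4047 — 2 statements merged into one kernel-verified Lean document; each statement's English description precedes it below -/
import Mathlib

section
/- ∫₀^{π/2} x·(π − x)/sin x dx = (7/2)ζ(3). -/
/-!
Taking the odd part of the Fourier series `∑ sin (n θ) / n³ = θ (θ - π) (θ - 2π) / 12` of the
third Bernoulli polynomial gives `x (π - x) = (8 / π) ∑ sin ((2k+1) x) / (2k+1)³` on `[0, π]`.
Dividing by `sin x`, each term integrates over `(0, π/2)` to `(π / 2) / (2k+1)³` by the Dirichlet
integral `∫ sin ((2k+1) x) / sin x = π / 2`, and the bound `|sin (n x)| ≤ n |sin x|` dominates the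
series by `∑ 1 / (2k+1)²`, so the sum and the integral commute. The result is
`4 ∑ 1 / (2k+1)³ = 4 (1 - 1/8) ζ(3)`.
-/

open Real

theorem HasSum.nat_odd_of_even {G : Type*} [AddCommGroup G] [TopologicalSpace G]
    [IsTopologicalAddGroup G] {f : ℕ → G} {a b : G} (hf : HasSum f a)
    (he : HasSum (fun k => f (2 * k)) b) : HasSum (fun k => f (2 * k + 1)) (a - b) := by
  have h_even : HasSum (fun n => if Even n then f n else 0) b := by
    refine ((mul_right_injective₀ two_ne_zero).hasSum_iff fun n hn => ?_).mp ?_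
    · exact if_neg fun ⟨k, hk⟩ => hn ⟨k, by simp [hk, two_mul]⟩
    · simpa [Function.comp_def] using he
  have h_odd : Function.Injective fun k : ℕ => 2 * k + 1 := fun _ _ h => by simpa using h
  refine (h_odd.hasSum_iff fun n hn => ?_).mpr (hf.sub h_even) |>.congr_fun fun k => ?_
  · rw [if_pos (Nat.not_odd_iff_even.mp fun ⟨k, hk⟩ => hn ⟨k, hk.symm⟩), sub_self]
  · simp

theorem hasSum_one_div_odd_pow {p : ℕ} (hp : 1 < p) :
    HasSum (fun k : ℕ => 1 / (2 * k + 1 : ℝ) ^ p)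
      ((1 - 1 / 2 ^ p) * ∑' n : ℕ, 1 / (n : ℝ) ^ p) := by
  set T := ∑' n : ℕ, 1 / (n : ℝ) ^ p
  have hT : HasSum (fun n : ℕ => 1 / (n : ℝ) ^ p) T :=
    (Real.summable_one_div_nat_pow.mpr hp).hasSum
  have h_even : HasSum (fun k : ℕ => 1 / ((2 * k : ℕ) : ℝ) ^ p) (T / 2 ^ p) :=
    (hT.div_const _).congr_fun fun k => by push_cast; rw [mul_pow]; field_simp
  rw [show (1 - 1 / 2 ^ p) * T = T - T / 2 ^ p by ring]
  exact (hT.nat_odd_of_even h_even).congr_fun fun k => by push_cast; rfl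

theorem riemannZeta_natCast_eq_ofReal_tsum {k : ℕ} (hk : 1 < k) :
    riemannZeta k = ((∑' n : ℕ, 1 / (n : ℝ) ^ k : ℝ) : ℂ) := by
  rw [zeta_nat_eq_tsum_of_gt_one hk, Complex.ofReal_tsum]
  push_cast
  rfl

theorem hasSum_sin_nat_mul_div_cube {θ : ℝ} (h0 : 0 ≤ θ) (h1 : θ ≤ 2 * π) :
    HasSum (fun n : ℕ => sin (n * θ) / n ^ 3) (θ * (θ - π) * (θ - 2 * π) / 12) := by
  have hx : θ / (2 * π) ∈ Set.Icc (0 : ℝ) 1 :=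
    ⟨by positivity, (div_le_one (by positivity)).mpr h1⟩
  convert hasSum_one_div_nat_pow_mul_sin one_ne_zero hx using 1
  · ext n
    rw [mul_right_comm, mul_div_cancel₀ _ (by positivity), one_div_mul_eq_div, mul_comm (n : ℝ)]
    rfl
  · have h3 : bernoulli 3 = 0 := by norm_num [bernoulli]
    have h2 : bernoulli 2 = 1 / 6 := by norm_num [bernoulli]
    simp [Polynomial.bernoulli, Finset.sum_range_succ, h2, h3, bernoulli_one, Nat.factorial]
    field_simp
    ring

theorem hasSum_sin_odd_mul_div_cube {θ : ℝ} (h0 : 0 ≤ θ) (h1 : θ ≤ π) :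
    HasSum (fun k : ℕ => sin ((2 * k + 1) * θ) / (2 * k + 1) ^ 3) (π / 8 * (θ * (π - θ))) := by
  have h_all := hasSum_sin_nat_mul_div_cube h0 (by linarith [pi_pos])
  have h_even : HasSum (fun k : ℕ => sin ((2 * k : ℕ) * θ) / ((2 * k : ℕ) : ℝ) ^ 3)
      (2 * θ * (2 * θ - π) * (2 * θ - 2 * π) / 12 / 8) := by
    refine ((hasSum_sin_nat_mul_div_cube (by positivity) (by linarith)).div_const 8).congr_fun
      fun k => ?_
    push_cast
    ring_nf
  rw [show π / 8 * (θ * (π - θ)) = θ * (θ - π) * (θ - 2 * π) / 12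
    - 2 * θ * (2 * θ - π) * (2 * θ - 2 * π) / 12 / 8 by ring]
  exact (h_all.nat_odd_of_even h_even).congr_fun fun k => by push_cast; rfl

theorem abs_sin_nat_mul_le (n : ℕ) (x : ℝ) : |sin (n * x)| ≤ n * |sin x| := by
  induction n with
  | zero => simp
  | succ n ih =>
    rw [Nat.cast_succ, add_one_mul, sin_add]
    calc |sin (n * x) * cos x + cos (n * x) * sin x|
        ≤ |sin (n * x)| * |cos x| + |cos (n * x)| * |sin x| := by
          simpa only [abs_mul] using abs_add_le (sin (n * x) * cos x) (cos (n * x) * sin x)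
      _ ≤ n * |sin x| * 1 + 1 * |sin x| := by
          gcongr
          exacts [abs_cos_le_one x, abs_cos_le_one _]
      _ = (n + 1) * |sin x| := by ring

theorem abs_sin_nat_mul_div_sin_le (n : ℕ) (x : ℝ) : |sin (n * x) / sin x| ≤ n := by
  rcases eq_or_ne (sin x) 0 with h | h
  · simp [h]
  · rw [abs_div, div_le_iff₀ (abs_pos.mpr h)]
    exact abs_sin_nat_mul_le n x

theorem sin_pos_of_mem_uIoc_zero_pi_div_two {x : ℝ} (hx : x ∈ Set.uIoc 0 (π / 2)) :
    0 < sin x := by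
  rw [Set.uIoc_of_le (by positivity)] at hx
  exact sin_pos_of_pos_of_lt_pi hx.1 (by linarith [hx.2, pi_pos])

theorem intervalIntegrable_sin_nat_mul_div_sin (n : ℕ) (a b : ℝ) :
    IntervalIntegrable (fun x => sin (n * x) / sin x) MeasureTheory.volume a b := by
  refine (intervalIntegrable_const (c := (n : ℝ))).mono_fun ?_ ?_
  · exact ((continuous_sin.comp (continuous_const_mul _)).measurable.div
      continuous_sin.measurable).aestronglyMeasurable
  · exact Filter.Eventually.of_forall fun x => by
      simpa only [Real.norm_eq_abs, Nat.abs_cast] using abs_sin_nat_mul_div_sin_le n x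

theorem intervalIntegrable_sin_odd_mul_div_sin (k : ℕ) (a b : ℝ) :
    IntervalIntegrable (fun x => sin ((2 * k + 1) * x) / sin x) MeasureTheory.volume a b := by
  simpa using intervalIntegrable_sin_nat_mul_div_sin (2 * k + 1) a b

theorem sin_odd_succ_mul_sub_sin_odd_mul (k : ℕ) (x : ℝ) :
    sin ((2 * (k + 1 : ℕ) + 1) * x) - sin ((2 * k + 1) * x)
      = 2 * sin x * cos ((2 * k + 2) * x) := by
  rw [sin_sub_sin]
  push_cast
  ring_nf

theorem integral_cos_even_mul (k : ℕ) : ∫ x in (0 : ℝ)..π / 2, cos ((2 * k + 2) * x) = 0 := by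
  rw [intervalIntegral.integral_comp_mul_left cos (by positivity), integral_cos, mul_zero,
    sin_zero, show (2 * k + 2) * (π / 2) = ((k + 1 : ℕ) : ℝ) * π by push_cast; ring,
    sin_nat_mul_pi]
  simp

theorem integral_sin_odd_mul_div_sin (k : ℕ) :
    ∫ x in (0 : ℝ)..π / 2, sin ((2 * k + 1) * x) / sin x = π / 2 := by
  induction k with
  | zero =>
    rw [intervalIntegral.integral_congr_ae (g := fun _ => 1) ?_]
    · simp
    · filter_upwards with x hx
      simpa using div_self (sin_pos_of_mem_uIoc_zero_pi_div_two hx).ne'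
  | succ k ih =>
    have h_diff : ∫ x in (0 : ℝ)..π / 2,
        sin ((2 * (k + 1 : ℕ) + 1) * x) / sin x - sin ((2 * k + 1) * x) / sin x =
        ∫ x in (0 : ℝ)..π / 2, 2 * cos ((2 * k + 2) * x) := by
      refine intervalIntegral.integral_congr_ae (Filter.Eventually.of_forall fun x hx => ?_)
      rw [div_sub_div_same, sin_odd_succ_mul_sub_sin_odd_mul,
        mul_right_comm, mul_div_cancel_right₀ _ (sin_pos_of_mem_uIoc_zero_pi_div_two hx).ne']
    rw [intervalIntegral.integral_sub (intervalIntegrable_sin_odd_mul_div_sin _ _ _)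
      (intervalIntegrable_sin_odd_mul_div_sin _ _ _), ih, intervalIntegral.integral_const_mul,
      integral_cos_even_mul, mul_zero, sub_eq_zero] at h_diff
    exact h_diff

theorem hasSum_integral_sin_odd_mul_div_sin_div_cube :
    HasSum (fun k : ℕ => ∫ x in (0 : ℝ)..π / 2, sin ((2 * k + 1) * x) / sin x / (2 * k + 1) ^ 3)
      (∫ x in (0 : ℝ)..π / 2, π / 8 * (x * (π - x)) / sin x) := by
  refine intervalIntegral.hasSum_integral_of_dominated_convergence
    (fun k _ => 1 / (2 * k + 1 : ℝ) ^ 2) (fun k => ?_) (fun k => ?_)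
    (Filter.Eventually.of_forall fun _ _ => (hasSum_one_div_odd_pow one_lt_two).summable)
    intervalIntegrable_const (Filter.Eventually.of_forall fun x hx => ?_)
  · exact (((continuous_sin.comp (continuous_const_mul _)).measurable.div
      continuous_sin.measurable).div_const _).aestronglyMeasurable
  · refine Filter.Eventually.of_forall fun x _ => ?_
    have h := abs_sin_nat_mul_div_sin_le (2 * k + 1) x
    push_cast at h
    rw [norm_div, Real.norm_eq_abs, norm_pow, Real.norm_of_nonneg (by positivity),
      div_le_div_iff₀ (by positivity) (by positivity)]
    calc |sin ((2 * k + 1) * x) / sin x| * (2 * k + 1 : ℝ) ^ 2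
        ≤ (2 * k + 1) * (2 * k + 1 : ℝ) ^ 2 := by gcongr
      _ = 1 * (2 * k + 1 : ℝ) ^ 3 := by ring
  · have hx' := hx
    rw [Set.uIoc_of_le (by positivity)] at hx'
    exact ((hasSum_sin_odd_mul_div_cube hx'.1.le (by linarith [hx'.2, pi_pos])).div_const
      (sin x)).congr_fun fun k => div_right_comm _ _ _

theorem integral_x_pi_sub_x_div_sin :
    ((∫ x in (0:ℝ)..(π/2), x * (π - x) / Real.sin x : ℝ) : ℂ)
      = (7/2) * riemannZeta 3 := by
  have h_terms := hasSum_integral_sin_odd_mul_div_sin_div_cube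
  simp_rw [intervalIntegral.integral_div, integral_sin_odd_mul_div_sin] at h_terms
  have h_odd := (hasSum_one_div_odd_pow (p := 3) (by norm_num)).mul_left (π / 2)
  simp_rw [mul_one_div] at h_odd
  have h_scale : ∫ x in (0 : ℝ)..π / 2, π / 8 * (x * (π - x)) / sin x
      = π / 8 * ∫ x in (0 : ℝ)..π / 2, x * (π - x) / sin x := by
    simp_rw [mul_div_assoc, intervalIntegral.integral_const_mul]
  have h_int : ∫ x in (0 : ℝ)..π / 2, x * (π - x) / sin x
      = 7 / 2 * ∑' n : ℕ, 1 / (n : ℝ) ^ 3 := by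
    have h := h_scale ▸ h_terms.unique h_odd
    field_simp at h
    linarith
  rw [h_int, show (3 : ℂ) = (3 : ℕ) by norm_num, riemannZeta_natCast_eq_ofReal_tsum (by norm_num)]
  push_cast
  ring
end

section
/- Catalan's constant satisfies G = (π/4) · ∑_{n=0}^∞ C(2n, n)² / ((2n+1)·2^{4n}), where C(2n,n) is the central binomial coefficient. -/
/-!
Integrating the Taylor series of `arctan x / x` termwise gives `G = ∫₀¹ arctan x / x dx`, and the
substitution `θ = 2 arctan x` (so that `sin θ = 2x / (1 + x²)`) turns this into
`½ ∫₀^{π/2} θ / sin θ dθ`. With `cₙ = C(2n, n) / 4ⁿ`, the binomial series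
`(1 - y²)^{-1/2} = ∑ cₙ y²ⁿ` integrates to `arcsin y = ∑ cₙ y²ⁿ⁺¹ / (2n + 1)`, so
`θ / sin θ = ∑ cₙ sin²ⁿ θ / (2n + 1)`, and Wallis' formula `∫₀^{π/2} sin²ⁿ θ dθ = (π/2) cₙ`
gives `G = (π/4) ∑ cₙ² / (2n + 1)`. Both interchanges of sum and integral are justified by
`L¹` bounds `O(1 / (2n + 1)²)`, the second one through `cₙ² (2n + 1) ≤ 1`.
-/

open Real MeasureTheory

noncomputable def normCentralBinom (n : ℕ) : ℝ := n.centralBinom / 4 ^ n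

lemma normCentralBinom_zero : normCentralBinom 0 = 1 := by simp [normCentralBinom]

lemma normCentralBinom_succ (n : ℕ) :
    normCentralBinom (n + 1) = (2 * n + 1) / (2 * n + 2) * normCentralBinom n := by
  have h : ((n : ℝ) + 1) * (n + 1).centralBinom = 2 * (2 * n + 1) * n.centralBinom := by
    exact_mod_cast Nat.succ_mul_centralBinom_succ n
  simp only [normCentralBinom]
  field_simp
  linear_combination 2 * (4 : ℝ) ^ n * h

lemma normCentralBinom_nonneg (n : ℕ) : 0 ≤ normCentralBinom n := by
  unfold normCentralBinom; positivity

lemma sq_normCentralBinom_mul_le (n : ℕ) : normCentralBinom n ^ 2 * (2 * n + 1) ≤ 1 := by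
  induction n with
  | zero => simp [normCentralBinom_zero]
  | succ n ih =>
    have hratio : ((2 * n + 1) / (2 * n + 2)) ^ 2 * (2 * n + 3) ≤ (2 * n + 1 : ℝ) := by
      rw [div_pow, div_mul_eq_mul_div, div_le_iff₀ (by positivity)]
      nlinarith
    calc normCentralBinom (n + 1) ^ 2 * (2 * (n + 1 : ℕ) + 1)
        = ((2 * n + 1) / (2 * n + 2)) ^ 2 * (2 * n + 3) * normCentralBinom n ^ 2 := by
          rw [normCentralBinom_succ]; push_cast; ring
      _ ≤ (2 * n + 1) * normCentralBinom n ^ 2 := by gcongr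
      _ ≤ 1 := by linarith

lemma Ring.choose_natCast_sub_half (n : ℕ) :
    Ring.choose ((n : ℝ) - 1 / 2) n = normCentralBinom n := by
  induction n with
  | zero => simp [normCentralBinom_zero]
  | succ n ih =>
    have h := Ring.choose_add_smul_choose ((n : ℝ) - 1 / 2) n 1
    rw [Ring.choose_one_right, ih, Nat.choose_one_right, nsmul_eq_mul] at h
    push_cast at h ⊢
    rw [normCentralBinom_succ, show (n : ℝ) + 1 - 1 / 2 = n - 1 / 2 + 1 by ring,
      ← mul_right_inj' (by positivity : (n : ℝ) + 1 ≠ 0), h]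
    field_simp
    ring

lemma hasSum_normCentralBinom_mul_pow {x : ℝ} (hx : |x| < 1) :
    HasSum (fun n => normCentralBinom n * x ^ n) (1 / √(1 - x)) := by
  have h := (one_div_one_sub_rpow_hasFPowerSeriesOnBall_zero (1 / 2)).hasSum
    (y := x) (by simpa [enorm_eq_nnnorm, ← NNReal.coe_lt_coe] using hx)
  simp only [FormalMultilinearSeries.ofScalars_apply_eq, smul_eq_mul, zero_add] at h
  have e : (fun n : ℕ => Ring.choose (1 / 2 + (n : ℝ) - 1) n * x ^ n) =
      fun n => normCentralBinom n * x ^ n := by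
    ext n
    rw [← Ring.choose_natCast_sub_half]
    ring_nf
  rwa [e, ← sqrt_eq_rpow] at h

lemma integral_sin_pow_two_mul (n : ℕ) :
    ∫ θ in 0..π / 2, sin θ ^ (2 * n) = π / 2 * normCentralBinom n := by
  induction n with
  | zero => simp [normCentralBinom_zero]
  | succ n ih =>
    rw [mul_add_one, integral_sin_pow, ih, normCentralBinom_succ, sin_zero, cos_pi_div_two]
    push_cast
    ring

lemma hasSum_intervalIntegral_of_summable_integral_norm {ι E : Type*} [Countable ι]
    [NormedAddCommGroup E] [NormedSpace ℝ E] {μ : Measure ℝ} {f : ι → ℝ → E} {a b : ℝ}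
    (hab : a ≤ b) (hf : ∀ i, IntervalIntegrable (f i) μ a b)
    (hs : Summable fun i => ∫ x in a..b, ‖f i x‖ ∂μ) :
    HasSum (fun i => ∫ x in a..b, f i x ∂μ) (∫ x in a..b, ∑' i, f i x ∂μ) := by
  simp only [intervalIntegral.integral_of_le hab] at hs ⊢
  exact hasSum_integral_of_summable_integral_norm (fun i => (hf i).1) hs

lemma summable_one_div_two_mul_add_one_sq :
    Summable fun n : ℕ => 1 / (2 * (n : ℝ) + 1) ^ 2 := by
  have := (Real.summable_one_div_nat_pow.2 one_lt_two).comp_injective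
    (i := fun n : ℕ => 2 * n + 1) fun a b h => by simpa using h
  simpa [Function.comp_def] using this

lemma integral_one_div_sqrt_one_sub_sq {y : ℝ} (hy : |y| < 1) :
    ∫ t in 0..y, 1 / √(1 - t ^ 2) = arcsin y := by
  have hlt : ∀ t ∈ Set.uIcc 0 y, t ^ 2 < 1 := fun t ht => by
    rw [sq_lt_one_iff_abs_lt_one]
    simpa using (Set.abs_sub_left_of_mem_uIcc ht).trans_lt (by simpa using hy)
  have hderiv : ∀ t ∈ Set.uIcc 0 y, HasDerivAt arcsin (1 / √(1 - t ^ 2)) t := fun t ht => by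
    have := abs_lt.1 ((sq_lt_one_iff_abs_lt_one t).1 (hlt t ht))
    exact hasDerivAt_arcsin (by linarith) (by linarith)
  have hint : IntervalIntegrable (fun t => 1 / √(1 - t ^ 2)) volume 0 y := by
    refine ContinuousOn.intervalIntegrable fun t ht => ?_
    have : √(1 - t ^ 2) ≠ 0 := (sqrt_pos.2 (sub_pos.2 (hlt t ht))).ne'
    fun_prop (disch := assumption)
  rw [intervalIntegral.integral_eq_sub_of_hasDerivAt hderiv hint, arcsin_zero, sub_zero]

lemma hasSum_arcsin {y : ℝ} (hy₀ : 0 ≤ y) (hy₁ : y < 1) :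
    HasSum (fun n => normCentralBinom n / (2 * n + 1) * y ^ (2 * n + 1)) (arcsin y) := by
  have hIcc : ∀ t ∈ Set.uIcc 0 y, 0 ≤ t ∧ t < 1 := fun t ht => by
    rw [Set.uIcc_of_le hy₀] at ht
    exact ⟨ht.1, ht.2.trans_lt hy₁⟩
  have hsq : ∀ t : ℝ, 0 ≤ t → t < 1 → |t ^ 2| < 1 := fun t ht₀ ht₁ => by
    rw [abs_of_nonneg (sq_nonneg t)]; nlinarith
  have hterm (n : ℕ) : ∫ t in 0..y, normCentralBinom n * t ^ (2 * n) =
      normCentralBinom n / (2 * n + 1) * y ^ (2 * n + 1) := by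
    rw [intervalIntegral.integral_const_mul, integral_pow, zero_pow (by positivity), sub_zero]
    push_cast
    ring
  have hnorm (n : ℕ) : ∫ t in 0..y, ‖normCentralBinom n * t ^ (2 * n)‖ =
      ∫ t in 0..y, normCentralBinom n * t ^ (2 * n) :=
    intervalIntegral.integral_congr fun t ht =>
      norm_of_nonneg (mul_nonneg (normCentralBinom_nonneg n) (pow_nonneg (hIcc t ht).1 _))
  have hsum : ∫ t in 0..y, ∑' n, normCentralBinom n * t ^ (2 * n) = arcsin y := by
    rw [← integral_one_div_sqrt_one_sub_sq (by rwa [abs_of_nonneg hy₀])]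
    refine intervalIntegral.integral_congr fun t ht => ?_
    simpa only [pow_mul] using
      (hasSum_normCentralBinom_mul_pow (hsq t (hIcc t ht).1 (hIcc t ht).2)).tsum_eq
  have hsummable : Summable fun n => normCentralBinom n / (2 * n + 1) * y ^ (2 * n + 1) := by
    refine .of_nonneg_of_le (fun n => by have := normCentralBinom_nonneg n; positivity)
      (fun n => ?_) ((hasSum_normCentralBinom_mul_pow (hsq y hy₀ hy₁)).summable.mul_left y)
    calc _ ≤ normCentralBinom n * y ^ (2 * n + 1) :=
          mul_le_mul_of_nonneg_right
            (div_le_self (normCentralBinom_nonneg n) (by linarith [n.cast_nonneg (α := ℝ)]))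
            (by positivity)
      _ = _ := by ring
  simpa only [hterm, hsum] using hasSum_intervalIntegral_of_summable_integral_norm hy₀
    (μ := volume) (f := fun (n : ℕ) (t : ℝ) => normCentralBinom n * t ^ (2 * n))
    (fun n => (by fun_prop : Continuous _).intervalIntegrable _ _)
    (by simpa only [hnorm, hterm] using hsummable)

lemma hasSum_self_div_sin {θ : ℝ} (h₀ : 0 < θ) (h₁ : θ < π / 2) :
    HasSum (fun n => normCentralBinom n / (2 * n + 1) * sin θ ^ (2 * n)) (θ / sin θ) := by
  have hsin : 0 < sin θ := sin_pos_of_pos_of_lt_pi h₀ (by linarith [pi_pos])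
  have hcos : 0 < cos θ := cos_pos_of_mem_Ioo ⟨by linarith, h₁⟩
  have h := (hasSum_arcsin hsin.le (by nlinarith [sin_sq_add_cos_sq θ])).div_const (sin θ)
  rw [arcsin_sin (by linarith) h₁.le] at h
  have e (n : ℕ) : normCentralBinom n / (2 * n + 1) * sin θ ^ (2 * n + 1) / sin θ =
      normCentralBinom n / (2 * n + 1) * sin θ ^ (2 * n) := by
    rw [pow_succ]; field_simp
  simpa only [e] using h

lemma hasSum_integral_self_div_sin :
    HasSum (fun n => π / 2 * (normCentralBinom n ^ 2 / (2 * n + 1)))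
      (∫ θ in 0..π / 2, θ / sin θ) := by
  have hterm (n : ℕ) : ∫ θ in 0..π / 2, normCentralBinom n / (2 * n + 1) * sin θ ^ (2 * n) =
      π / 2 * (normCentralBinom n ^ 2 / (2 * n + 1)) := by
    rw [intervalIntegral.integral_const_mul, integral_sin_pow_two_mul]
    ring
  have hnorm (n : ℕ) : ∫ θ in 0..π / 2, ‖normCentralBinom n / (2 * n + 1) * sin θ ^ (2 * n)‖ =
      π / 2 * (normCentralBinom n ^ 2 / (2 * n + 1)) := by
    rw [← hterm]
    refine intervalIntegral.integral_congr fun θ _ => Real.norm_of_nonneg ?_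
    have := normCentralBinom_nonneg n
    have := (even_two_mul n).pow_nonneg (sin θ)
    positivity
  have hbound (n : ℕ) : π / 2 * (normCentralBinom n ^ 2 / (2 * n + 1)) ≤
      π / 2 * (1 / (2 * n + 1) ^ 2) := by
    refine mul_le_mul_of_nonneg_left ?_ (by positivity)
    rw [div_le_div_iff₀ (by positivity) (by positivity)]
    nlinarith [sq_normCentralBinom_mul_le n]
  have h := hasSum_intervalIntegral_of_summable_integral_norm pi_div_two_pos.le
    (fun n => (by fun_prop : Continuous _).intervalIntegrable _ _)
    ((summable_one_div_two_mul_add_one_sq.mul_left (π / 2)).of_nonneg_of_le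
      (fun n => by rw [hnorm]; have := normCentralBinom_nonneg n; positivity)
      (fun n => (hnorm n).trans_le (hbound n)))
  simp only [hterm] at h
  rwa [intervalIntegral.integral_congr_uIoo fun θ hθ => ?_] at h
  rw [Set.uIoo_of_le pi_div_two_pos.le] at hθ
  exact (hasSum_self_div_sin hθ.1 hθ.2).tsum_eq

lemma hasSum_arctan_div {x : ℝ} (hx : |x| < 1) (hx₀ : x ≠ 0) :
    HasSum (fun n : ℕ => (-1) ^ n * x ^ (2 * n) / (2 * n + 1)) (arctan x / x) := by
  have h := (Real.hasSum_arctan (by rwa [Real.norm_eq_abs])).div_const x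
  have e (n : ℕ) : (-1) ^ n * x ^ (2 * n + 1) / ((2 * n + 1 : ℕ) : ℝ) / x =
      (-1) ^ n * x ^ (2 * n) / (2 * n + 1) := by
    rw [pow_succ]; push_cast; field_simp
  simpa only [e] using h

lemma hasSum_integral_arctan_div :
    HasSum (fun n : ℕ => (-1 : ℝ) ^ n / (2 * n + 1) ^ 2) (∫ x in 0..1, arctan x / x) := by
  have hterm (n : ℕ) : ∫ x in (0 : ℝ)..1, (-1) ^ n * x ^ (2 * n) / (2 * n + 1) =
      (-1) ^ n / (2 * n + 1) ^ 2 := by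
    rw [intervalIntegral.integral_div, intervalIntegral.integral_const_mul, integral_pow,
      one_pow, zero_pow (by positivity), sub_zero]
    push_cast
    field_simp
  have hnorm (n : ℕ) : ∫ x in (0 : ℝ)..1, ‖(-1) ^ n * x ^ (2 * n) / (2 * n + 1)‖ =
      1 / (2 * n + 1) ^ 2 := by
    simp only [norm_div, norm_mul, norm_pow, norm_neg, norm_one, one_pow, one_mul, norm_eq_abs,
      (even_two_mul n).pow_abs, abs_of_pos (by positivity : (0 : ℝ) < 2 * n + 1)]
    rw [intervalIntegral.integral_div, integral_pow, one_pow, zero_pow (by positivity), sub_zero]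
    push_cast
    field_simp
  have h := hasSum_intervalIntegral_of_summable_integral_norm zero_le_one
    (μ := volume) (f := fun (n : ℕ) (x : ℝ) => (-1) ^ n * x ^ (2 * n) / (2 * n + 1))
    (fun n => (by fun_prop : Continuous _).intervalIntegrable _ _)
    (by simpa only [hnorm] using summable_one_div_two_mul_add_one_sq)
  simp only [hterm] at h
  rwa [intervalIntegral.integral_congr_uIoo fun x hx => ?_] at h
  rw [Set.uIoo_of_le zero_le_one] at hx
  exact (hasSum_arctan_div (by rw [abs_lt]; constructor <;> linarith [hx.1, hx.2]) hx.1.ne').tsum_eq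

lemma sin_two_mul_arctan (x : ℝ) : sin (2 * arctan x) = 2 * x / (1 + x ^ 2) := by
  have h : √(1 + x ^ 2) ^ 2 = 1 + x ^ 2 := sq_sqrt (by positivity)
  rw [sin_two_mul, sin_arctan, cos_arctan]
  field_simp
  rw [h]

lemma integral_arctan_div_self :
    ∫ x in 0..1, arctan x / x = 1 / 2 * ∫ θ in 0..π / 2, θ / sin θ := by
  -- a monotone change of variables, which needs no regularity of `θ / sin θ`
  have h := intervalIntegral.integral_comp_mul_deriv_of_deriv_nonneg (a := 0) (b := 1)
    (f := fun x => 2 * arctan x) (f' := fun x => 2 / (1 + x ^ 2)) (g := fun θ => θ / sin θ)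
    (by fun_prop) (fun x _ => by simpa [div_eq_mul_inv] using (hasDerivAt_arctan x).const_mul 2)
    (fun x _ => by positivity)
  simp only [arctan_zero, arctan_one, mul_zero, show 2 * (π / 4) = π / 2 by ring] at h
  rw [← h, ← intervalIntegral.integral_const_mul]
  refine intervalIntegral.integral_congr fun x _ => ?_
  rcases eq_or_ne x 0 with rfl | hx
  · simp -- both sides are `0`, by the convention `a / 0 = 0`
  simp only [Function.comp, sin_two_mul_arctan]
  field_simp

theorem catalan_central_binomial :
    ∑' n : ℕ, (-1 : ℝ)^n / (2*(n:ℝ)+1)^2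
      = (π/4) * ∑' n : ℕ, ((Nat.choose (2*n) n : ℝ))^2 / ((2*(n:ℝ)+1) * 2^(4*n)) := by
  have hterm (n : ℕ) : ((Nat.choose (2 * n) n : ℝ)) ^ 2 / ((2 * n + 1) * 2 ^ (4 * n)) =
      normCentralBinom n ^ 2 / (2 * n + 1) := by
    have h : (2 : ℝ) ^ (4 * n) = (4 ^ n) ^ 2 := by
      rw [← pow_mul, show (4 : ℝ) = 2 ^ 2 by norm_num, ← pow_mul]; ring_nf
    rw [normCentralBinom, ← Nat.centralBinom_eq_two_mul_choose, h, div_pow]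
    field_simp
  rw [hasSum_integral_arctan_div.tsum_eq, integral_arctan_div_self,
    ← hasSum_integral_self_div_sin.tsum_eq, tsum_mul_left]
  simp only [hterm]
  ring
end
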